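/- Let u, v : ℝ × ℝ → ℝ be smooth (C^∞) functions of (t, x) and let a, b, c, ε, κ, λ, σ be real constants with ε = 0 and σ = 0. If (u, v) solves the BBM-KdV system, then for every real number s the Galilean-boosted pair ũ(t,x) = u(t, x − (a + b)·s·t), ṽ(t,x) = v(t, x − (a + b)·s·t) + s also solves the BBM-KdV system. (This is the invariance under the one-parameter group generated by the symmetry X₄ = (a + b)·t·∂_x + ∂_v.) -/

import Mathlib

open Real

noncomputable def pt (f : ℝ × ℝ → ℝ) : ℝ × ℝ → ℝ :=
  fun p => deriv (fun s => f (s, p.2)) p.1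

noncomputable def px (f : ℝ × ℝ → ℝ) : ℝ × ℝ → ℝ :=
  fun p => deriv (fun s => f (p.1, s)) p.2

lemma pt_eq_fderiv (f : ℝ × ℝ → ℝ) (hf : Differentiable ℝ f) (p : ℝ × ℝ) :
    pt f p = fderiv ℝ f p (1, 0) := by
  have h1 : HasDerivAt (fun s : ℝ => (s, p.2)) ((1:ℝ), (0:ℝ)) p.1 := by
    simpa using (hasDerivAt_id p.1).prodMk (hasDerivAt_const p.1 p.2)
  have h2 := (hf p).hasFDerivAt
  have h3 := h2.comp_hasDerivAt p.1 h1
  simpa [pt, Function.comp_def] using h3.deriv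

lemma px_eq_fderiv (f : ℝ × ℝ → ℝ) (hf : Differentiable ℝ f) (p : ℝ × ℝ) :
    px f p = fderiv ℝ f p (0, 1) := by
  have h1 : HasDerivAt (fun s : ℝ => (p.1, s)) ((0:ℝ), (1:ℝ)) p.2 := by
    simpa using (hasDerivAt_const p.2 p.1).prodMk (hasDerivAt_id p.2)
  have h2 := (hf p).hasFDerivAt
  have h3 := h2.comp_hasDerivAt p.2 h1
  simpa [px, Function.comp_def] using h3.deriv

lemma contDiff_px (f : ℝ × ℝ → ℝ) (hf : ContDiff ℝ (⊤ : ℕ∞) f) : ContDiff ℝ (⊤ : ℕ∞) (px f) := by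
  have h : px f = fun p => fderiv ℝ f p (0, 1) :=
    funext (px_eq_fderiv f (hf.differentiable (by simp)))
  rw [h]
  exact (hf.fderiv_right (by simp)).clm_apply contDiff_const

lemma px_boost (f : ℝ × ℝ → ℝ) (hf : Differentiable ℝ f) (k : ℝ) (p : ℝ × ℝ) :
    px (fun p => f (p.1, p.2 - k * p.1)) p = px f (p.1, p.2 - k * p.1) := by
  have h1 : HasDerivAt (fun s : ℝ => ((p.1 : ℝ), s - k * p.1)) ((0:ℝ), (1:ℝ)) p.2 := by
    simpa using (hasDerivAt_const p.2 p.1).prodMk ((hasDerivAt_id p.2).sub_const (k * p.1))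
  have h2 := (hf (p.1, p.2 - k * p.1)).hasFDerivAt
  have h3 := h2.comp_hasDerivAt p.2 h1
  have h4 : HasDerivAt (fun s => f (p.1, s - k * p.1))
      ((fderiv ℝ f (p.1, p.2 - k * p.1)) (0, 1)) p.2 := by
    simpa [Function.comp_def] using h3
  show deriv (fun s => f (p.1, s - k * p.1)) p.2 = _
  rw [h4.deriv, px_eq_fderiv f hf]

lemma pt_boost (f : ℝ × ℝ → ℝ) (hf : Differentiable ℝ f) (k : ℝ) (p : ℝ × ℝ) :
    pt (fun p => f (p.1, p.2 - k * p.1)) p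
      = pt f (p.1, p.2 - k * p.1) - k * px f (p.1, p.2 - k * p.1) := by
  have h1 : HasDerivAt (fun s : ℝ => (s, p.2 - k * s)) ((1:ℝ), -k) p.1 := by
    have := (hasDerivAt_id p.1).prodMk
      ((hasDerivAt_const p.1 p.2).sub ((hasDerivAt_id p.1).const_mul k))
    simpa using this
  have h2 := (hf (p.1, p.2 - k * p.1)).hasFDerivAt
  have h3 := h2.comp_hasDerivAt p.1 h1
  have hd : ((1:ℝ), -k) = ((1:ℝ), (0:ℝ)) + (-k) • ((0:ℝ), (1:ℝ)) := by
    simp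
  have h4 : HasDerivAt (fun s => f (s, p.2 - k * s))
      ((fderiv ℝ f (p.1, p.2 - k * p.1)) (1, -k)) p.1 := by
    simpa [Function.comp_def] using h3
  show deriv (fun s => f (s, p.2 - k * s)) p.1 = _
  rw [h4.deriv, hd, map_add, map_smul,
    pt_eq_fderiv f hf, px_eq_fderiv f hf]
  simp
  ring

lemma px_add_const (g : ℝ × ℝ → ℝ) (s : ℝ) :
    px (fun p => g p + s) = px g := by
  funext p
  simp only [px]
  exact deriv_add_const s

lemma pt_add_const (g : ℝ × ℝ → ℝ) (s : ℝ) :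
    pt (fun p => g p + s) = pt g := by
  funext p
  simp only [pt]
  exact deriv_add_const s

lemma px_boost_fun (f : ℝ × ℝ → ℝ) (hf : Differentiable ℝ f) (k : ℝ) :
    px (fun p => f (p.1, p.2 - k * p.1)) = fun p => px f (p.1, p.2 - k * p.1) :=
  funext (px_boost f hf k)

/-- The BBM-KdV system: F1 = 0 and F2 = 0 everywhere. -/
def BBMKdV (a b c ε κ lam σ : ℝ) (u v : ℝ × ℝ → ℝ) : Prop :=
  (∀ p : ℝ × ℝ, pt u p + (a + b) * v p * px u p + (a * u p + c) * px v p
      + ε * px (px (pt u)) p + κ * px (px (px v)) p = 0) ∧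
  (∀ p : ℝ × ℝ, pt v p + (b * u p + c) * px u p + (a + b) * v p * px v p
      + lam * px (px (px u)) p + σ * px (px (pt v)) p = 0)

theorem stmt_13 (u v : ℝ × ℝ → ℝ) (hu : ContDiff ℝ (⊤ : ℕ∞) u) (hv : ContDiff ℝ (⊤ : ℕ∞) v)
    (a b c ε κ lam σ : ℝ)
    (he : ε = 0) (hs : σ = 0)
    (hsol : BBMKdV a b c ε κ lam σ u v) :
    ∀ s : ℝ, BBMKdV a b c ε κ lam σ
      (fun p => u (p.1, p.2 - (a + b) * s * p.1))
      (fun p => v (p.1, p.2 - (a + b) * s * p.1) + s) := by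
  intro s
  subst he hs
  set k := (a + b) * s with hk
  have hud := hu.differentiable (by simp)
  have hvd := hv.differentiable (by simp)
  have hpxu := (contDiff_px u hu).differentiable (by simp)
  have hpxv := (contDiff_px v hv).differentiable (by simp)
  have hpxxu := (contDiff_px _ (contDiff_px u hu)).differentiable (by simp)
  have hpxxv := (contDiff_px _ (contDiff_px v hv)).differentiable (by simp)
  -- function-level rewrites
  have hBu : px (fun p => u (p.1, p.2 - k * p.1)) = fun p => px u (p.1, p.2 - k * p.1) :=
    px_boost_fun u hud k
  have hBu2 : px (px (fun p => u (p.1, p.2 - k * p.1)))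
      = fun p => px (px u) (p.1, p.2 - k * p.1) := by
    rw [hBu]; exact px_boost_fun (px u) hpxu k
  have hBu3 : px (px (px (fun p => u (p.1, p.2 - k * p.1))))
      = fun p => px (px (px u)) (p.1, p.2 - k * p.1) := by
    rw [hBu2]; exact px_boost_fun (px (px u)) hpxxu k
  have hBv : px (fun p => v (p.1, p.2 - k * p.1) + s)
      = fun p => px v (p.1, p.2 - k * p.1) := by
    rw [px_add_const]; exact px_boost_fun v hvd k
  have hBv3 : px (px (px (fun p => v (p.1, p.2 - k * p.1) + s)))
      = fun p => px (px (px v)) (p.1, p.2 - k * p.1) := by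
    rw [hBv, px_boost_fun (px v) hpxv k]; exact px_boost_fun (px (px v)) hpxxv k
  constructor
  · intro p
    have h1 := (hsol.1 (p.1, p.2 - k * p.1))
    have hptu := pt_boost u hud k p
    rw [hBu, hBv3] at *
    simp only [hBv]
    rw [hptu]
    simp only [hk] at *
    linear_combination h1
  · intro p
    have h2 := (hsol.2 (p.1, p.2 - k * p.1))
    have hptv : pt (fun p => v (p.1, p.2 - k * p.1) + s) p
        = pt v (p.1, p.2 - k * p.1) - k * px v (p.1, p.2 - k * p.1) := by
      rw [pt_add_const]; exact pt_boost v hvd k p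
    rw [hBu, hBu3] at *
    simp only [hBv]
    rw [hptv]
    simp only [hk] at *
    linear_combination h2
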